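/- arXiv:2603.29978 — 2 statements merged into one kernel-verified Lean document; each statement's English description precedes it below -/
import Mathlib

section
/- Let n > k ≥ 1 be integers. The van der Waerden complex vdw(n,k) is a pseudo-manifold with boundary if and only if vdw(n,k) is a pseudo-manifold and (n,k) ≠ (3,1). -/
open MvPolynomial

/-- `F` is a facet of the van der Waerden complex `vdw(n,k)`: an arithmetic
progression `{i, i+a, …, i+k*a} ⊆ {1,…,n}` with `i ≥ 1`, `a ≥ 1`. -/
def vdwFacet (n k : ℕ) (F : Finset ℕ) : Prop :=
  ∃ i a : ℕ, 1 ≤ i ∧ 1 ≤ a ∧ i + k * a ≤ n ∧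
    F = (Finset.range (k + 1)).image (fun j => i + j * a)

/-- `F` is a face of `vdw(n,k)`: a nonempty subset of a facet. -/
def vdwFace (n k : ℕ) (F : Finset ℕ) : Prop :=
  F.Nonempty ∧ ∃ G : Finset ℕ, vdwFacet n k G ∧ F ⊆ G

/-- `f_i(vdw(n,k))`: the number of `i`-dimensional faces (faces with `i+1` elements). -/
noncomputable def vdwF (n k i : ℕ) : ℕ :=
  Set.ncard {F : Finset ℕ | vdwFace n k F ∧ F.card = i + 1}

/-- The defining ideal of `A(vdw(n,k))`: the Stanley–Reisner ideal of `vdw(n,k)`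
together with the squares of the variables.  Variable `j : Fin n` corresponds to
`x_{j+1}`. -/
noncomputable def vdwIdeal (K : Type*) [Field K] (n k : ℕ) :
    Ideal (MvPolynomial (Fin n) K) :=
  Ideal.span
    ({m | ∃ S : Finset (Fin n), S.Nonempty ∧
        ¬ vdwFace n k (S.image (fun j : Fin n => (j : ℕ) + 1)) ∧ m = ∏ j ∈ S, X j} ∪
      {m | ∃ j : Fin n, m = X j ^ 2})

/-- The Artinian ring `A(vdw(n,k)) = K[x_1,…,x_n]/(I_{vdw(n,k)} + ⟨x_1²,…,x_n²⟩)`. -/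
abbrev vdwA (K : Type*) [Field K] (n k : ℕ) :=
  MvPolynomial (Fin n) K ⧸ vdwIdeal K n k

/-- The degree-`i` graded piece of `A(vdw(n,k))`: the image in the quotient of the
homogeneous polynomials of degree `i`. -/
noncomputable def vdwPiece (K : Type*) [Field K] (n k i : ℕ) :
    Submodule K (vdwA K n k) :=
  Submodule.map (Ideal.Quotient.mkₐ K (vdwIdeal K n k)).toLinearMap
    (MvPolynomial.homogeneousSubmodule (Fin n) K i)

/-- The class of the linear form `ℓ = x_1 + ⋯ + x_n` in `A(vdw(n,k))`. -/
noncomputable def vdwEll (K : Type*) [Field K] (n k : ℕ) : vdwA K n k :=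
  Ideal.Quotient.mk (vdwIdeal K n k) (∑ j : Fin n, X j)

/-- The multiplication map `×u : A(vdw(n,k))_i → A(vdw(n,k))_j` has maximal rank:
the dimension of the image of the degree-`i` piece under multiplication by `u`
equals the minimum of the dimensions of the degree-`i` and degree-`j` pieces. -/
def vdwMaxRank (K : Type*) [Field K] (n k : ℕ) (u : vdwA K n k) (i j : ℕ) : Prop :=
  Module.finrank K ↥(Submodule.map (LinearMap.mulLeft K u) (vdwPiece K n k i)) =
    min (Module.finrank K ↥(vdwPiece K n k i)) (Module.finrank K ↥(vdwPiece K n k j))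

/-- `A(vdw(n,k))` has the Weak Lefschetz Property: there is a linear form `ℓ`
such that `×ℓ : A_i → A_{i+1}` has maximal rank for all `i ≥ 0`. -/
def vdwWLP (K : Type*) [Field K] (n k : ℕ) : Prop :=
  ∃ ℓ : MvPolynomial (Fin n) K, ℓ.IsHomogeneous 1 ∧
    ∀ i : ℕ, vdwMaxRank K n k (Ideal.Quotient.mk (vdwIdeal K n k) ℓ) i (i + 1)
/-- The van der Waerden complex `vdw(n,k)` is a pseudo-manifold: all facets have
`k+1` elements, every face with `k` elements lies in at most two facets, and any
two facets are connected by a chain of facets whose consecutive intersections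
have `k` elements. -/
def vdwIsPseudoManifold (n k : ℕ) : Prop :=
  (∀ F : Finset ℕ, vdwFacet n k F → F.card = k + 1) ∧
  (∀ S : Finset ℕ, vdwFace n k S → S.card = k →
    Set.ncard {F : Finset ℕ | vdwFacet n k F ∧ S ⊆ F} ≤ 2) ∧
  (∀ F F' : Finset ℕ, vdwFacet n k F → vdwFacet n k F' →
    ∃ m : ℕ, ∃ G : ℕ → Finset ℕ, G 0 = F ∧ G m = F' ∧
      (∀ j ≤ m, vdwFacet n k (G j)) ∧
      (∀ j < m, (G j ∩ G (j + 1)).card = k))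

/-- The pseudo-manifold `vdw(n,k)` has a boundary: some face with `k` elements
lies in exactly one facet. -/
def vdwHasBoundary (n k : ℕ) : Prop :=
  ∃ S : Finset ℕ, vdwFace n k S ∧ S.card = k ∧
    Set.ncard {F : Finset ℕ | vdwFacet n k F ∧ S ⊆ F} = 1

/-- For a positive integer `m = 2^{ν₂(m)}·t` with `t` odd,
`vval m = (−1)^{ν₂(m)+1}·2^{ν₂(m)}`. -/
def vval (m : ℕ) : ℤ :=
  (-1) ^ (padicValNat 2 m + 1) * 2 ^ (padicValNat 2 m)

lemma vdwFacet_subset {n k : ℕ} {F : Finset ℕ} (h : vdwFacet n k F) :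
    F ⊆ Finset.Icc 1 n := by
  obtain ⟨i, a, hi, ha, hle, rfl⟩ := h
  intro x hx
  simp only [Finset.mem_image, Finset.mem_range, Nat.lt_succ_iff] at hx
  obtain ⟨j, hj, rfl⟩ := hx
  have hja : j * a ≤ k * a := Nat.mul_le_mul_right a hj
  simp only [Finset.mem_Icc]
  omega

lemma vdwFinite (n k : ℕ) (S : Finset ℕ) :
    {F : Finset ℕ | vdwFacet n k F ∧ S ⊆ F}.Finite := by
  apply Set.Finite.subset ((Finset.Icc 1 n).powerset.finite_toSet)
  intro F hF
  simp only [Finset.coe_powerset, Set.mem_preimage, Set.mem_powerset_iff, Finset.coe_subset]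
  exact vdwFacet_subset hF.1

lemma facet31 (F : Finset ℕ) :
    vdwFacet 3 1 F ↔ F = {1, 2} ∨ F = {2, 3} ∨ F = {1, 3} := by
  constructor
  · rintro ⟨i, a, hi, ha, hle, rfl⟩
    simp only [one_mul] at hle
    have hi2 : i ≤ 2 := by omega
    have ha2 : a ≤ 2 := by omega
    interval_cases i <;> interval_cases a
    · exact Or.inl (by decide)
    · exact Or.inr (Or.inr (by decide))
    · exact Or.inr (Or.inl (by decide))
    · exact absurd hle (by decide)
  · rintro (rfl | rfl | rfl)
    · exact ⟨1, 1, le_refl _, le_refl _, by omega, by decide⟩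
    · exact ⟨2, 1, by norm_num, le_refl _, by omega, by decide⟩
    · exact ⟨1, 2, le_refl _, by norm_num, by omega, by decide⟩

lemma vdw31_no_boundary : ¬ vdwHasBoundary 3 1 := by
  rintro ⟨S, ⟨hne, G, hG, hSG⟩, hcard, hncard⟩
  obtain ⟨x, rfl⟩ := Finset.card_eq_one.mp hcard
  have hx : x ∈ Finset.Icc 1 3 := vdwFacet_subset hG (hSG (by simp))
  simp only [Finset.mem_Icc] at hx
  have key : ∀ A B : Finset ℕ, A ≠ B →
      {F : Finset ℕ | vdwFacet 3 1 F ∧ {x} ⊆ F} = {A, B} → False := by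
    intro A B hAB hset
    rw [hset, Set.ncard_pair hAB] at hncard
    omega
  obtain ⟨h1, h3⟩ := hx
  interval_cases x
  · refine key {1, 2} {1, 3} (by decide) ?_
    ext F
    simp only [Set.mem_setOf_eq, facet31, Set.mem_insert_iff, Set.mem_singleton_iff]
    constructor
    · rintro ⟨(rfl | rfl | rfl), h⟩
      · exact Or.inl rfl
      · exact absurd h (by decide)
      · exact Or.inr rfl
    · rintro (rfl | rfl)
      · exact ⟨Or.inl rfl, by decide⟩
      · exact ⟨Or.inr (Or.inr rfl), by decide⟩
  · refine key {1, 2} {2, 3} (by decide) ?_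
    ext F
    simp only [Set.mem_setOf_eq, facet31, Set.mem_insert_iff, Set.mem_singleton_iff]
    constructor
    · rintro ⟨(rfl | rfl | rfl), h⟩
      · exact Or.inl rfl
      · exact Or.inr rfl
      · exact absurd h (by decide)
    · rintro (rfl | rfl)
      · exact ⟨Or.inl rfl, by decide⟩
      · exact ⟨Or.inr (Or.inl rfl), by decide⟩
  · refine key {2, 3} {1, 3} (by decide) ?_
    ext F
    simp only [Set.mem_setOf_eq, facet31, Set.mem_insert_iff, Set.mem_singleton_iff]
    constructor
    · rintro ⟨(rfl | rfl | rfl), h⟩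
      · exact absurd h (by decide)
      · exact Or.inl rfl
      · exact Or.inr rfl
    · rintro (rfl | rfl)
      · exact ⟨Or.inr (Or.inl rfl), by decide⟩
      · exact ⟨Or.inr (Or.inr rfl), by decide⟩

lemma vdw_not_pm_of_k1 {n : ℕ} (hn : 4 ≤ n) : ¬ vdwIsPseudoManifold n 1 := by
  rintro ⟨-, h2, -⟩
  have hf1 : vdwFacet n 1 ({1, 2} : Finset ℕ) :=
    ⟨1, 1, le_refl _, le_refl _, by omega, by decide⟩
  have hf2 : vdwFacet n 1 ({1, 3} : Finset ℕ) :=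
    ⟨1, 2, le_refl _, by norm_num, by omega, by decide⟩
  have hf3 : vdwFacet n 1 ({1, 4} : Finset ℕ) :=
    ⟨1, 3, le_refl _, by norm_num, by omega, by decide⟩
  have hface : vdwFace n 1 ({1} : Finset ℕ) := ⟨⟨1, by simp⟩, {1, 2}, hf1, by decide⟩
  have hle := h2 {1} hface (by simp)
  have hsub : (↑({{1, 2}, {1, 3}, {1, 4}} : Finset (Finset ℕ)) : Set (Finset ℕ)) ⊆
      {F : Finset ℕ | vdwFacet n 1 F ∧ {1} ⊆ F} := by
    intro F hF
    simp only [Finset.coe_insert, Finset.coe_singleton, Set.mem_insert_iff,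
      Set.mem_singleton_iff] at hF
    rcases hF with rfl | rfl | rfl
    · exact ⟨hf1, by decide⟩
    · exact ⟨hf2, by decide⟩
    · exact ⟨hf3, by decide⟩
  have h3 := Set.ncard_le_ncard hsub (vdwFinite n 1 {1})
  rw [Set.ncard_coe_finset] at h3
  have hc : ({{1, 2}, {1, 3}, {1, 4}} : Finset (Finset ℕ)).card = 3 := by decide
  omega

lemma vdw21_boundary : vdwHasBoundary 2 1 := by
  refine ⟨{1}, ⟨⟨1, by simp⟩, {1, 2},
    ⟨1, 1, le_refl _, le_refl _, by omega, by decide⟩, by decide⟩, by simp, ?_⟩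
  have hset : {F : Finset ℕ | vdwFacet 2 1 F ∧ {1} ⊆ F} = {({1, 2} : Finset ℕ)} := by
    ext F
    simp only [Set.mem_setOf_eq, Set.mem_singleton_iff]
    constructor
    · rintro ⟨⟨i, a, hi, ha, hle, rfl⟩, -⟩
      simp only [one_mul] at hle
      have hi1 : i = 1 := by omega
      have ha1 : a = 1 := by omega
      subst hi1; subst ha1
      decide
    · rintro rfl
      exact ⟨⟨1, 1, le_refl _, le_refl _, by omega, by decide⟩, by decide⟩
  rw [hset]
  exact Set.ncard_singleton _

lemma vdw_boundary_set {n k : ℕ} (hk2 : 2 ≤ k) (hkn : k < n) :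
    {F : Finset ℕ | vdwFacet n k F ∧ Finset.Icc 1 k ⊆ F} =
      {(Finset.range (k + 1)).image (fun j => 1 + j * 1)} := by
  ext F
  simp only [Set.mem_setOf_eq, Set.mem_singleton_iff]
  constructor
  · rintro ⟨⟨i, a, hi, ha, hle, rfl⟩, hsub⟩
    have h1 : (1 : ℕ) ∈ (Finset.range (k + 1)).image (fun j => i + j * a) :=
      hsub (by simp only [Finset.mem_Icc]; omega)
    have h2 : (2 : ℕ) ∈ (Finset.range (k + 1)).image (fun j => i + j * a) :=
      hsub (by simp only [Finset.mem_Icc]; omega)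
    simp only [Finset.mem_image, Finset.mem_range] at h1 h2
    obtain ⟨j1, hj1, e1⟩ := h1
    obtain ⟨j2, hj2, e2⟩ := h2
    have hi1 : i = 1 := le_antisymm (Nat.le.intro e1) hi
    subst hi1
    have e2' : j2 * a = 1 := by
      have := Nat.add_left_cancel (e2.trans (by norm_num : (2 : ℕ) = 1 + 1))
      exact this
    have ha1 : a = 1 := Nat.dvd_one.mp ⟨j2, by rw [← e2', mul_comm]⟩
    subst ha1
    rfl
  · rintro rfl
    refine ⟨⟨1, 1, le_refl _, le_refl _, by omega, rfl⟩, ?_⟩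
    intro s hs
    simp only [Finset.mem_Icc] at hs
    simp only [Finset.mem_image, Finset.mem_range]
    exact ⟨s - 1, by omega, by omega⟩

/-- Let `n > k ≥ 1`.  Then `vdw(n,k)` is a pseudo-manifold with
boundary if and only if it is a pseudo-manifold and `(n,k) ≠ (3,1)`. -/
theorem vdw_pseudomanifold_with_boundary_iff (n k : ℕ) (hk : 1 ≤ k) (hkn : k < n) :
    (vdwIsPseudoManifold n k ∧ vdwHasBoundary n k) ↔
      (vdwIsPseudoManifold n k ∧ ¬(n = 3 ∧ k = 1)) := by
  constructor
  · rintro ⟨hpm, hbd⟩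
    refine ⟨hpm, ?_⟩
    rintro ⟨rfl, rfl⟩
    exact vdw31_no_boundary hbd
  · rintro ⟨hpm, hne⟩
    refine ⟨hpm, ?_⟩
    rcases Nat.lt_or_ge k 2 with hk2 | hk2
    · have hk1 : k = 1 := by omega
      subst hk1
      rcases Nat.lt_or_ge n 3 with hn | hn
      · have hn2 : n = 2 := by omega
        subst hn2
        exact vdw21_boundary
      · have hn4 : 4 ≤ n := by
          rcases Nat.eq_or_lt_of_le hn with h | h
          · exact absurd ⟨h.symm, rfl⟩ hne
          · omega
        exact absurd hpm (vdw_not_pm_of_k1 hn4)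
    · refine ⟨Finset.Icc 1 k, ⟨⟨1, by simp; omega⟩,
        (Finset.range (k + 1)).image (fun j => 1 + j * 1),
        ⟨1, 1, le_refl _, le_refl _, by omega, rfl⟩, ?_⟩, by simp, ?_⟩
      · intro s hs
        simp only [Finset.mem_Icc] at hs
        simp only [Finset.mem_image, Finset.mem_range]
        exact ⟨s - 1, by omega, by omega⟩
      · rw [vdw_boundary_set hk2 hkn]
        exact Set.ncard_singleton _
end

section
/- Let n ≥ 5 be an integer and set d = ⌊(n−1)/3⌋ and e = ⌊(n−1)/4⌋. Then the number of two-dimensional faces of the van der Waerden complex satisfies the recursion f_2(vdw(n,3)) = f_2(vdw(n−1,3)) + 4d − e, and the number of one-dimensional faces satisfies the bound f_1(vdw(n,3)) ≤ f_1(vdw(n−1,3)) + 6d − 4e + 5. -/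
open MvPolynomial

lemma image4 (i a : ℕ) : (Finset.range 4).image (fun j => i + j * a)
    = {i, i + a, i + 2*a, i + 3*a} := by
  ext x
  simp only [Finset.mem_image, Finset.mem_range, Finset.mem_insert, Finset.mem_singleton]
  constructor
  · rintro ⟨j, hj, rfl⟩; interval_cases j <;> omega
  · rintro (rfl | rfl | rfl | rfl)
    exacts [⟨0, by omega, by ring⟩, ⟨1, by omega, by ring⟩, ⟨2, by omega, by ring⟩,
      ⟨3, by omega, by ring⟩]

lemma facet3_iff (n : ℕ) (F : Finset ℕ) : vdwFacet n 3 F ↔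
    ∃ i a : ℕ, 1 ≤ i ∧ 1 ≤ a ∧ i + 3*a ≤ n ∧ F = {i, i + a, i + 2*a, i + 3*a} := by
  unfold vdwFacet
  constructor
  · rintro ⟨i, a, h1, h2, h3, rfl⟩
    exact ⟨i, a, h1, h2, by omega, by rw [show (3:ℕ)+1 = 4 from rfl, image4]⟩
  · rintro ⟨i, a, h1, h2, h3, rfl⟩
    exact ⟨i, a, h1, h2, by omega, by rw [show (3:ℕ)+1 = 4 from rfl, image4]⟩

lemma face_bounds {m : ℕ} {F : Finset ℕ} (h : vdwFace m 3 F) :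
    ∀ x ∈ F, 1 ≤ x ∧ x ≤ m := by
  obtain ⟨-, G, hG, hsub⟩ := h
  rw [facet3_iff] at hG
  obtain ⟨i, a, h1, h2, h3, rfl⟩ := hG
  intro x hx
  have := hsub hx
  simp only [Finset.mem_insert, Finset.mem_singleton] at this
  omega

lemma face_mono {m n : ℕ} {F : Finset ℕ} (h : vdwFace m 3 F) (hmn : m ≤ n) :
    vdwFace n 3 F := by
  obtain ⟨hne, G, hG, hsub⟩ := h
  rw [facet3_iff] at hG
  obtain ⟨i, a, h1, h2, h3, rfl⟩ := hG
  exact ⟨hne, _, (facet3_iff _ _).2 ⟨i, a, h1, h2, by omega, rfl⟩, hsub⟩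

lemma face_of_subset {m i a : ℕ} {F : Finset ℕ} (hne : F.Nonempty)
    (hsub : F ⊆ {i, i + a, i + 2*a, i + 3*a}) (h1 : 1 ≤ i) (h2 : 1 ≤ a)
    (h3 : i + 3*a ≤ m) : vdwFace m 3 F :=
  ⟨hne, _, (facet3_iff _ _).2 ⟨i, a, h1, h2, h3, rfl⟩, hsub⟩

lemma faces_finite (m c : ℕ) : {F : Finset ℕ | vdwFace m 3 F ∧ F.card = c}.Finite := by
  apply Set.Finite.subset (Finset.finite_toSet ((Finset.Icc 1 m).powerset))
  intro F hF
  simp only [Finset.coe_powerset, Set.mem_preimage, Set.mem_powerset_iff,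
    Finset.coe_subset, Finset.mem_coe, Finset.mem_powerset]
  intro x hx
  have := face_bounds hF.1 x hx
  simp only [Finset.mem_Icc]; omega

lemma ncard_split (n c : ℕ) (hn : 1 ≤ n) :
    Set.ncard {F : Finset ℕ | vdwFace n 3 F ∧ F.card = c}
      = Set.ncard {F : Finset ℕ | vdwFace (n-1) 3 F ∧ F.card = c}
        + Set.ncard {F : Finset ℕ | (vdwFace n 3 F ∧ F.card = c) ∧ ¬ vdwFace (n-1) 3 F} := by
  have hd : Disjoint {F : Finset ℕ | vdwFace (n-1) 3 F ∧ F.card = c}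
      {F : Finset ℕ | (vdwFace n 3 F ∧ F.card = c) ∧ ¬ vdwFace (n-1) 3 F} := by
    rw [Set.disjoint_left]; rintro F ⟨h1, -⟩ ⟨-, h2⟩; exact h2 h1
  have hs := (faces_finite (n-1) c)
  have ht : {F : Finset ℕ | (vdwFace n 3 F ∧ F.card = c) ∧ ¬ vdwFace (n-1) 3 F}.Finite := by
    apply (faces_finite n c).subset
    intro F hF
    exact ⟨hF.1.1, hF.1.2⟩
  rw [← Set.ncard_union_eq hd hs ht]
  congr 1
  ext F
  simp only [Set.mem_setOf_eq, Set.mem_union]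
  constructor
  · intro h
    by_cases hold : vdwFace (n-1) 3 F
    · exact Or.inl ⟨hold, h.2⟩
    · exact Or.inr ⟨h, hold⟩
  · rintro (⟨h1, h2⟩ | ⟨h1, -⟩)
    · exact ⟨face_mono h1 (by omega), h2⟩
    · exact h1
lemma card_triple {x y z : ℕ} (h1 : x ≠ y) (h2 : x ≠ z) (h3 : y ≠ z) :
    ({x, y, z} : Finset ℕ).card = 3 := by
  rw [Finset.card_insert_of_notMem (by simp [h1, h2]),
    Finset.card_insert_of_notMem (by simp [h3]), Finset.card_singleton]

lemma subset_four {F : Finset ℕ} {i a : ℕ} (h2 : 1 ≤ a)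
    (hsub : F ⊆ ({i, i + a, i + 2*a, i + 3*a} : Finset ℕ)) (hcard : F.card = 3) :
    F = {i + a, i + 2*a, i + 3*a} ∨ F = {i, i + 2*a, i + 3*a} ∨
    F = {i, i + a, i + 3*a} ∨ F = {i, i + a, i + 2*a} := by
  have hG4 : ({i, i + a, i + 2*a, i + 3*a} : Finset ℕ).card = 4 := by
    rw [Finset.card_insert_of_notMem (by simp; omega),
      Finset.card_insert_of_notMem (by simp; omega),
      Finset.card_insert_of_notMem (by simp; omega), Finset.card_singleton]
  have hsd : (({i, i + a, i + 2*a, i + 3*a} : Finset ℕ) \ F).card = 1 := by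
    rw [Finset.card_sdiff_of_subset hsub, hG4, hcard]
  obtain ⟨x, hx⟩ := Finset.card_eq_one.1 hsd
  have hxF : x ∉ F := by
    have : x ∈ ({i, i + a, i + 2*a, i + 3*a} : Finset ℕ) \ F := by rw [hx]; simp
    exact (Finset.mem_sdiff.1 this).2
  have hxG : x ∈ ({i, i + a, i + 2*a, i + 3*a} : Finset ℕ) := by
    have : x ∈ ({i, i + a, i + 2*a, i + 3*a} : Finset ℕ) \ F := by rw [hx]; simp
    exact (Finset.mem_sdiff.1 this).1
  have hF : F = ({i, i + a, i + 2*a, i + 3*a} : Finset ℕ).erase x := by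
    ext y
    rw [Finset.mem_erase]
    constructor
    · intro hy
      refine ⟨fun hyx => hxF (hyx ▸ hy), hsub hy⟩
    · rintro ⟨hne, hyG⟩
      by_contra hyF
      have : y ∈ ({i, i + a, i + 2*a, i + 3*a} : Finset ℕ) \ F := Finset.mem_sdiff.2 ⟨hyG, hyF⟩
      rw [hx] at this
      exact hne (Finset.mem_singleton.1 this)
  simp only [Finset.mem_insert, Finset.mem_singleton] at hxG
  rcases hxG with rfl | rfl | rfl | rfl
  · left; rw [hF]; ext y; simp [Finset.mem_erase]; omega
  · right; left; rw [hF]; ext y; simp [Finset.mem_erase]; omega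
  · right; right; left; rw [hF]; ext y; simp [Finset.mem_erase]; omega
  · right; right; right; rw [hF]; ext y; simp [Finset.mem_erase]; omega

lemma type4_not_face {n a : ℕ} (h2 : 1 ≤ a) (h3 : 3*a + 1 ≤ n) (h4 : n ≤ 4*a) :
    ¬ vdwFace (n-1) 3 ({n - 3*a, n - 2*a, n - a} : Finset ℕ) := by
  rintro ⟨-, G, hG, hsub⟩
  rw [facet3_iff] at hG
  obtain ⟨i, b, hi, hb, htop, rfl⟩ := hG
  have m1 := hsub (by simp : n - 3*a ∈ ({n - 3*a, n - 2*a, n - a} : Finset ℕ))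
  have m2 := hsub (by simp : n - 2*a ∈ ({n - 3*a, n - 2*a, n - a} : Finset ℕ))
  have m3 := hsub (by simp : n - a ∈ ({n - 3*a, n - 2*a, n - a} : Finset ℕ))
  simp only [Finset.mem_insert, Finset.mem_singleton] at m1 m2 m3
  omega
def newTri (n : ℕ) : Finset (Finset ℕ) :=
  ((Finset.Icc 1 ((n-1)/3)).image fun a => {n - 3*a, n - 2*a, n}) ∪
  ((Finset.Icc 1 ((n-1)/3)).image fun a => {n - 3*a, n - a, n}) ∪
  ((Finset.Icc 1 ((n-1)/3)).image fun a => {n - 2*a, n - a, n}) ∪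
  ((Finset.Ioc ((n-1)/4) ((n-1)/3)).image fun a => {n - 3*a, n - 2*a, n - a})

lemma new3_eq (n : ℕ) (hn : 5 ≤ n) :
    {F : Finset ℕ | (vdwFace n 3 F ∧ F.card = 3) ∧ ¬ vdwFace (n-1) 3 F} = ↑(newTri n) := by
  ext F
  simp only [Set.mem_setOf_eq, Finset.coe_union, Set.mem_union, Finset.mem_coe, newTri,
    Finset.mem_union, Finset.mem_image, Finset.mem_Icc, Finset.mem_Ioc]
  constructor
  · rintro ⟨⟨⟨hne, G, hG, hsub⟩, hcard⟩, hnew⟩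
    rw [facet3_iff] at hG
    obtain ⟨i, a, h1, h2, h3, rfl⟩ := hG
    have htop : i + 3*a = n := by
      by_contra hc
      exact hnew (face_of_subset hne hsub h1 h2 (by omega))
    have had : a ≤ (n-1)/3 := by omega
    rcases subset_four h2 hsub hcard with h | h | h | h
    · refine Or.inl (Or.inr ⟨a, ⟨h2, had⟩, ?_⟩)
      rw [h]; ext y; simp; omega
    · refine Or.inl (Or.inl (Or.inr ⟨a, ⟨h2, had⟩, ?_⟩))
      rw [h]; ext y; simp; omega
    · refine Or.inl (Or.inl (Or.inl ⟨a, ⟨h2, had⟩, ?_⟩))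
      rw [h]; ext y; simp; omega
    · have hae : (n-1)/4 < a := by
        by_contra hc
        push_neg at hc
        apply hnew
        apply face_of_subset (m := n-1) (i := n - 4*a) (a := a) hne _ (by omega) h2 (by omega)
        rw [h]; intro y hy; simp at hy ⊢; omega
      refine Or.inr ⟨a, ⟨hae, had⟩, ?_⟩
      rw [h]; ext y; simp; omega
  · rintro (((⟨a, ⟨ha1, ha2⟩, rfl⟩ | ⟨a, ⟨ha1, ha2⟩, rfl⟩) | ⟨a, ⟨ha1, ha2⟩, rfl⟩) |
      ⟨a, ⟨ha1, ha2⟩, rfl⟩) <;> have h3a : 3*a + 1 ≤ n := by omega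
    · refine ⟨⟨face_of_subset (i := n - 3*a) (a := a) ⟨n, by simp⟩ ?_ (by omega) ha1 (by omega),
        card_triple (by omega) (by omega) (by omega)⟩, fun hold => ?_⟩
      · intro y hy; simp at hy ⊢; omega
      · have := face_bounds hold n (by simp); omega
    · refine ⟨⟨face_of_subset (i := n - 3*a) (a := a) ⟨n, by simp⟩ ?_ (by omega) ha1 (by omega),
        card_triple (by omega) (by omega) (by omega)⟩, fun hold => ?_⟩
      · intro y hy; simp at hy ⊢; omega
      · have := face_bounds hold n (by simp); omega
    · refine ⟨⟨face_of_subset (i := n - 3*a) (a := a) ⟨n, by simp⟩ ?_ (by omega) (by omega) (by omega),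
        card_triple (by omega) (by omega) (by omega)⟩, fun hold => ?_⟩
      · intro y hy; simp at hy ⊢; omega
      · have := face_bounds hold n (by simp); omega
    · have h4 : n ≤ 4*a := by omega
      refine ⟨⟨face_of_subset (i := n - 3*a) (a := a) ⟨n - a, by simp⟩ ?_ (by omega) (by omega) (by omega),
        card_triple (by omega) (by omega) (by omega)⟩, type4_not_face (by omega) h3a h4⟩
      intro y hy; simp at hy ⊢; omega
lemma newTri_card (n : ℕ) (hn : 5 ≤ n) :
    (newTri n).card = 4*((n-1)/3) - (n-1)/4 := by
  set d := (n-1)/3 with hd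
  set e := (n-1)/4 with he
  have h3d : 3*d + 1 ≤ n := by omega
  -- cards of the four pieces
  have hc1 : ((Finset.Icc 1 d).image fun a => ({n - 3*a, n - 2*a, n} : Finset ℕ)).card = d := by
    rw [Finset.card_image_of_injOn, Nat.card_Icc]
    · omega
    intro a ha b hb hab
    simp only [Finset.coe_Icc, Set.mem_Icc] at ha hb
    have H := Finset.ext_iff.mp hab
    have H1 := (H (n - 3*a)).mp (by simp)
    have H2 := (H (n - 3*b)).mpr (by simp)
    simp only [Finset.mem_insert, Finset.mem_singleton] at H1 H2
    omega
  have hc2 : ((Finset.Icc 1 d).image fun a => ({n - 3*a, n - a, n} : Finset ℕ)).card = d := by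
    rw [Finset.card_image_of_injOn, Nat.card_Icc]
    · omega
    intro a ha b hb hab
    simp only [Finset.coe_Icc, Set.mem_Icc] at ha hb
    have H := Finset.ext_iff.mp hab
    have H1 := (H (n - 3*a)).mp (by simp)
    have H2 := (H (n - 3*b)).mpr (by simp)
    simp only [Finset.mem_insert, Finset.mem_singleton] at H1 H2
    omega
  have hc3 : ((Finset.Icc 1 d).image fun a => ({n - 2*a, n - a, n} : Finset ℕ)).card = d := by
    rw [Finset.card_image_of_injOn, Nat.card_Icc]
    · omega
    intro a ha b hb hab
    simp only [Finset.coe_Icc, Set.mem_Icc] at ha hb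
    have H := Finset.ext_iff.mp hab
    have H1 := (H (n - 2*a)).mp (by simp)
    have H2 := (H (n - 2*b)).mpr (by simp)
    simp only [Finset.mem_insert, Finset.mem_singleton] at H1 H2
    omega
  have hc4 : ((Finset.Ioc e d).image fun a => ({n - 3*a, n - 2*a, n - a} : Finset ℕ)).card
      = d - e := by
    rw [Finset.card_image_of_injOn, Nat.card_Ioc]
    intro a ha b hb hab
    simp only [Finset.coe_Ioc, Set.mem_Ioc] at ha hb
    have H := Finset.ext_iff.mp hab
    have H1 := (H (n - 3*a)).mp (by simp)
    have H2 := (H (n - 3*b)).mpr (by simp)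
    simp only [Finset.mem_insert, Finset.mem_singleton] at H1 H2
    omega
  -- disjointness
  have D1 : Disjoint ((Finset.Icc 1 d).image fun a => ({n - 3*a, n - 2*a, n} : Finset ℕ))
      ((Finset.Icc 1 d).image fun a => ({n - 3*a, n - a, n} : Finset ℕ)) := by
    rw [Finset.disjoint_left]
    rintro F hF1 hF2
    simp only [Finset.mem_image, Finset.mem_Icc] at hF1 hF2
    obtain ⟨a, ha, rfl⟩ := hF1
    obtain ⟨b, hb, hab⟩ := hF2
    have H := Finset.ext_iff.mp hab
    have H1 := (H (n - 2*a)).mpr (by simp)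
    have H2 := (H (n - b)).mp (by simp)
    have H3 := (H (n - 3*b)).mp (by simp)
    have H4 := (H (n - 3*a)).mpr (by simp)
    simp only [Finset.mem_insert, Finset.mem_singleton] at H1 H2 H3 H4
    omega
  have D2 : Disjoint (((Finset.Icc 1 d).image fun a => ({n - 3*a, n - 2*a, n} : Finset ℕ)) ∪
      ((Finset.Icc 1 d).image fun a => ({n - 3*a, n - a, n} : Finset ℕ)))
      ((Finset.Icc 1 d).image fun a => ({n - 2*a, n - a, n} : Finset ℕ)) := by
    rw [Finset.disjoint_left]
    rintro F hF1 hF2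
    simp only [Finset.mem_union, Finset.mem_image, Finset.mem_Icc] at hF1 hF2
    obtain ⟨c, hc, hceq⟩ := hF2
    rcases hF1 with ⟨a, ha, rfl⟩ | ⟨a, ha, rfl⟩ <;>
    · have H := Finset.ext_iff.mp hceq
      have H1 := (H (n - 2*c)).mp (by simp)
      have H2 := (H (n - c)).mp (by simp)
      simp only [Finset.mem_insert, Finset.mem_singleton] at H1 H2
      omega
  have D3 : Disjoint ((((Finset.Icc 1 d).image fun a => ({n - 3*a, n - 2*a, n} : Finset ℕ)) ∪
      ((Finset.Icc 1 d).image fun a => ({n - 3*a, n - a, n} : Finset ℕ))) ∪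
      ((Finset.Icc 1 d).image fun a => ({n - 2*a, n - a, n} : Finset ℕ)))
      ((Finset.Ioc e d).image fun a => ({n - 3*a, n - 2*a, n - a} : Finset ℕ)) := by
    rw [Finset.disjoint_left]
    rintro F hF1 hF2
    simp only [Finset.mem_union, Finset.mem_image, Finset.mem_Icc, Finset.mem_Ioc] at hF1 hF2
    obtain ⟨c, hc, hceq⟩ := hF2
    have hnF : n ∈ F := by
      rcases hF1 with (⟨a, ha, rfl⟩ | ⟨a, ha, rfl⟩) | ⟨a, ha, rfl⟩ <;> simp
    rw [← hceq] at hnF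
    simp only [Finset.mem_insert, Finset.mem_singleton] at hnF
    omega
  rw [newTri, Finset.card_union_of_disjoint D3, Finset.card_union_of_disjoint D2,
    Finset.card_union_of_disjoint D1, hc1, hc2, hc3, hc4]
  omega
def edgeCover (n : ℕ) : Finset (Finset ℕ) :=
  ((Finset.Icc 1 ((n-1)/3)).image fun g => {n - g, n}) ∪
  ((Finset.Icc ((n-1)/3/2+1) ((n-1)/3)).image fun j => {n - 2*j, n}) ∪
  ((Finset.Icc ((n-1)/3/3+1) ((n-1)/3)).image fun j => {n - 3*j, n}) ∪
  ((Finset.Ioc ((n-1)/4) ((n-1)/3)).image fun a => {n - 2*a, n - a}) ∪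
  ((Finset.Ioc ((n-1)/4) ((n-1)/3)).image fun a => {n - 3*a, n - 2*a}) ∪
  ((Finset.Ioc ((n-1)/4) ((n-1)/3)).image fun a => {n - 3*a, n - a})

lemma edgeCover_card (n : ℕ) (hn : 5 ≤ n) :
    (edgeCover n).card ≤ (n-1)/3 + ((n-1)/3 - (n-1)/3/2) + ((n-1)/3 - (n-1)/3/3)
      + 3 * ((n-1)/3 - (n-1)/4) := by
  have h1 := Finset.card_union_le
    (((Finset.Icc 1 ((n-1)/3)).image fun g => ({n - g, n} : Finset ℕ)) ∪
     ((Finset.Icc ((n-1)/3/2+1) ((n-1)/3)).image fun j => ({n - 2*j, n} : Finset ℕ)) ∪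
     ((Finset.Icc ((n-1)/3/3+1) ((n-1)/3)).image fun j => ({n - 3*j, n} : Finset ℕ)) ∪
     ((Finset.Ioc ((n-1)/4) ((n-1)/3)).image fun a => ({n - 2*a, n - a} : Finset ℕ)) ∪
     ((Finset.Ioc ((n-1)/4) ((n-1)/3)).image fun a => ({n - 3*a, n - 2*a} : Finset ℕ)))
    ((Finset.Ioc ((n-1)/4) ((n-1)/3)).image fun a => ({n - 3*a, n - a} : Finset ℕ))
  have h2 := Finset.card_union_le
    (((Finset.Icc 1 ((n-1)/3)).image fun g => ({n - g, n} : Finset ℕ)) ∪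
     ((Finset.Icc ((n-1)/3/2+1) ((n-1)/3)).image fun j => ({n - 2*j, n} : Finset ℕ)) ∪
     ((Finset.Icc ((n-1)/3/3+1) ((n-1)/3)).image fun j => ({n - 3*j, n} : Finset ℕ)) ∪
     ((Finset.Ioc ((n-1)/4) ((n-1)/3)).image fun a => ({n - 2*a, n - a} : Finset ℕ)))
    ((Finset.Ioc ((n-1)/4) ((n-1)/3)).image fun a => ({n - 3*a, n - 2*a} : Finset ℕ))
  have h3 := Finset.card_union_le
    (((Finset.Icc 1 ((n-1)/3)).image fun g => ({n - g, n} : Finset ℕ)) ∪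
     ((Finset.Icc ((n-1)/3/2+1) ((n-1)/3)).image fun j => ({n - 2*j, n} : Finset ℕ)) ∪
     ((Finset.Icc ((n-1)/3/3+1) ((n-1)/3)).image fun j => ({n - 3*j, n} : Finset ℕ)))
    ((Finset.Ioc ((n-1)/4) ((n-1)/3)).image fun a => ({n - 2*a, n - a} : Finset ℕ))
  have h4 := Finset.card_union_le
    (((Finset.Icc 1 ((n-1)/3)).image fun g => ({n - g, n} : Finset ℕ)) ∪
     ((Finset.Icc ((n-1)/3/2+1) ((n-1)/3)).image fun j => ({n - 2*j, n} : Finset ℕ)))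
    ((Finset.Icc ((n-1)/3/3+1) ((n-1)/3)).image fun j => ({n - 3*j, n} : Finset ℕ))
  have h5 := Finset.card_union_le
    ((Finset.Icc 1 ((n-1)/3)).image fun g => ({n - g, n} : Finset ℕ))
    ((Finset.Icc ((n-1)/3/2+1) ((n-1)/3)).image fun j => ({n - 2*j, n} : Finset ℕ))
  have i1 := Finset.card_image_le (s := Finset.Icc 1 ((n-1)/3))
    (f := fun g => ({n - g, n} : Finset ℕ))
  have i2 := Finset.card_image_le (s := Finset.Icc ((n-1)/3/2+1) ((n-1)/3))
    (f := fun j => ({n - 2*j, n} : Finset ℕ))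
  have i3 := Finset.card_image_le (s := Finset.Icc ((n-1)/3/3+1) ((n-1)/3))
    (f := fun j => ({n - 3*j, n} : Finset ℕ))
  have i4 := Finset.card_image_le (s := Finset.Ioc ((n-1)/4) ((n-1)/3))
    (f := fun a => ({n - 2*a, n - a} : Finset ℕ))
  have i5 := Finset.card_image_le (s := Finset.Ioc ((n-1)/4) ((n-1)/3))
    (f := fun a => ({n - 3*a, n - 2*a} : Finset ℕ))
  have i6 := Finset.card_image_le (s := Finset.Ioc ((n-1)/4) ((n-1)/3))
    (f := fun a => ({n - 3*a, n - a} : Finset ℕ))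
  rw [Nat.card_Icc] at i1 i2 i3
  rw [Nat.card_Ioc] at i4 i5 i6
  rw [edgeCover]
  omega
lemma pairn_mem (n c a : ℕ) (hc1 : 1 ≤ c) (hc3 : c ≤ 3) (ha : 1 ≤ a)
    (had : a ≤ (n-1)/3) : ({n - c*a, n} : Finset ℕ) ∈ edgeCover n := by
  simp only [edgeCover, Finset.mem_union, Finset.mem_image, Finset.mem_Icc, Finset.mem_Ioc]
  by_cases h : c*a ≤ (n-1)/3
  · exact Or.inl (Or.inl (Or.inl (Or.inl (Or.inl ⟨c*a, ⟨Nat.mul_pos hc1 ha, h⟩, rfl⟩))))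
  · interval_cases c
    · omega
    · exact Or.inl (Or.inl (Or.inl (Or.inl (Or.inr ⟨a, ⟨by omega, had⟩, rfl⟩))))
    · exact Or.inl (Or.inl (Or.inl (Or.inr ⟨a, ⟨by omega, had⟩, rfl⟩)))

lemma new2_subset (n : ℕ) (hn : 5 ≤ n) :
    {F : Finset ℕ | (vdwFace n 3 F ∧ F.card = 2) ∧ ¬ vdwFace (n-1) 3 F} ⊆ ↑(edgeCover n) := by
  rintro F ⟨⟨⟨hne, G, hG, hsub⟩, hcard⟩, hnew⟩
  rw [facet3_iff] at hG
  obtain ⟨i, a, h1, h2, h3, rfl⟩ := hG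
  have htop : i + 3*a = n := by
    by_contra hc
    exact hnew (face_of_subset hne hsub h1 h2 (by omega))
  have had : a ≤ (n-1)/3 := by omega
  obtain ⟨u, v, huv, rfl⟩ := Finset.card_eq_two.1 hcard
  have hu := hsub (by simp : u ∈ ({u, v} : Finset ℕ))
  have hv := hsub (by simp : v ∈ ({u, v} : Finset ℕ))
  simp only [Finset.mem_insert, Finset.mem_singleton] at hu hv
  have hlow : ∀ c1 c2 : ℕ, 1 ≤ c1 → c1 < c2 → c2 ≤ 3 →
      ({u, v} : Finset ℕ) = {n - c2*a, n - c1*a} → ({u, v} : Finset ℕ) ∈ edgeCover n := by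
    intro c1 c2 hcc1 hcc hcc2 heq
    have hae : (n-1)/4 < a := by
      by_contra hc
      push_neg at hc
      apply hnew
      apply face_of_subset (m := n-1) (i := n - 4*a) (a := a) hne _ (by omega) h2 (by omega)
      rw [heq]; intro y hy; simp only [Finset.mem_insert, Finset.mem_singleton] at hy ⊢
      interval_cases c2 <;> interval_cases c1 <;> omega
    rw [heq]
    simp only [edgeCover, Finset.mem_union, Finset.mem_image, Finset.mem_Ioc]
    interval_cases c2 <;> interval_cases c1
    · exact Or.inl (Or.inl (Or.inr ⟨a, ⟨hae, had⟩, by norm_num⟩))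
    · exact Or.inr ⟨a, ⟨hae, had⟩, by norm_num⟩
    · exact Or.inl (Or.inr ⟨a, ⟨hae, had⟩, by norm_num⟩)
  have hp3 : ({u, v} : Finset ℕ) = {n - 3*a, n} → ({u, v} : Finset ℕ) ∈ edgeCover n := by
    intro h; rw [h]; exact pairn_mem n 3 a (by omega) (by omega) h2 had
  have hp2 : ({u, v} : Finset ℕ) = {n - 2*a, n} → ({u, v} : Finset ℕ) ∈ edgeCover n := by
    intro h; rw [h]; exact pairn_mem n 2 a (by omega) (by omega) h2 had
  have hp1 : ({u, v} : Finset ℕ) = {n - a, n} → ({u, v} : Finset ℕ) ∈ edgeCover n := by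
    intro h; rw [h]
    have := pairn_mem n 1 a (by omega) (by omega) h2 had
    rwa [one_mul] at this
  rcases hu with hu | hu | hu | hu <;> rcases hv with hv | hv | hv | hv
  · omega
  · exact hlow 2 3 (by omega) (by omega) (by omega) (by ext y; simp; omega)
  · exact hlow 1 3 (by omega) (by omega) (by omega) (by ext y; simp; omega)
  · exact hp3 (by ext y; simp; omega)
  · exact hlow 2 3 (by omega) (by omega) (by omega) (by ext y; simp; omega)
  · omega
  · exact hlow 1 2 (by omega) (by omega) (by omega) (by ext y; simp; omega)
  · exact hp2 (by ext y; simp; omega)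
  · exact hlow 1 3 (by omega) (by omega) (by omega) (by ext y; simp; omega)
  · exact hlow 1 2 (by omega) (by omega) (by omega) (by ext y; simp; omega)
  · omega
  · exact hp1 (by ext y; simp; omega)
  · exact hp3 (by ext y; simp; omega)
  · exact hp2 (by ext y; simp; omega)
  · exact hp1 (by ext y; simp; omega)
  · omega
/-- Let `n ≥ 5`, `d = ⌊(n−1)/3⌋` and `e = ⌊(n−1)/4⌋`.  Then
`f_2(vdw(n,3)) = f_2(vdw(n−1,3)) + 4d − e` and
`f_1(vdw(n,3)) ≤ f_1(vdw(n−1,3)) + 6d − 4e + 5`. -/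
theorem vdw_f_vector_recursion (n : ℕ) (hn : 5 ≤ n) :
    (vdwF n 3 2 : ℤ) =
        vdwF (n - 1) 3 2 + 4 * (((n - 1) / 3 : ℕ) : ℤ) - (((n - 1) / 4 : ℕ) : ℤ) ∧
    (vdwF n 3 1 : ℤ) ≤
        vdwF (n - 1) 3 1 + 6 * (((n - 1) / 3 : ℕ) : ℤ)
          - 4 * (((n - 1) / 4 : ℕ) : ℤ) + 5 := by
  have e2 : ∀ m, vdwF m 3 2 = Set.ncard {F : Finset ℕ | vdwFace m 3 F ∧ F.card = 3} :=
    fun m => rfl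
  have e1 : ∀ m, vdwF m 3 1 = Set.ncard {F : Finset ℕ | vdwFace m 3 F ∧ F.card = 2} :=
    fun m => rfl
  constructor
  · have key : Set.ncard {F : Finset ℕ | vdwFace n 3 F ∧ F.card = 3}
        = Set.ncard {F : Finset ℕ | vdwFace (n-1) 3 F ∧ F.card = 3}
          + (4*((n-1)/3) - (n-1)/4) := by
      rw [ncard_split n 3 (by omega), new3_eq n hn, Set.ncard_coe_finset, newTri_card n hn]
    rw [← e2 n, ← e2 (n-1)] at key
    omega
  · have key : Set.ncard {F : Finset ℕ | vdwFace n 3 F ∧ F.card = 2}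
        = Set.ncard {F : Finset ℕ | vdwFace (n-1) 3 F ∧ F.card = 2}
          + Set.ncard {F : Finset ℕ | (vdwFace n 3 F ∧ F.card = 2) ∧ ¬ vdwFace (n-1) 3 F} :=
      ncard_split n 2 (by omega)
    have hb : Set.ncard {F : Finset ℕ | (vdwFace n 3 F ∧ F.card = 2) ∧ ¬ vdwFace (n-1) 3 F}
        ≤ (edgeCover n).card := by
      rw [← Set.ncard_coe_finset]
      exact Set.ncard_le_ncard (new2_subset n hn) (Finset.finite_toSet _)
    have hc := edgeCover_card n hn
    rw [← e1 n, ← e1 (n-1)] at key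
    omega
end
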